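/- Fix n ≥ 1 and real numbers x₁, …, xₙ. Then lim_{N→∞} N^{-n} det_{n×n}[J_N((xⱼ − xₖ)/N)] = det_{n×n}[K₀(x₁,…,xₙ)], where K₀(x₁,…,xₙ) is the n×n matrix whose (i,j) entry is sin(π(xᵢ − xⱼ))/(π(xᵢ − xⱼ)) (equal to 1 when i = j). -/

import Mathlib

open Complex Real

/-- `e(θ) = e^{2πiθ}`. -/
noncomputable def eTheta (θ : ℝ) : ℂ := Complex.exp (2 * π * Complex.I * θ)

/-- The Dirichlet-type kernel `J_N(θ) = ∑_{m=0}^{N-1} e(mθ)`. -/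
noncomputable def JKernel (N : ℕ) (θ : ℝ) : ℂ :=
  ∑ m ∈ Finset.range N, eTheta (m * θ)

/-- The normalized sinc kernel `sin(πx)/(πx)`, equal to `1` at `x = 0`. -/
noncomputable def sinKernel (x : ℝ) : ℝ := if x = 0 then 1 else Real.sin (π * x) / (π * x)

lemma tendsto_nat_mul_exp_div_sub_one (c : ℂ) (hc : c ≠ 0) :
    Filter.Tendsto (fun N : ℕ => (N : ℂ) * (Complex.exp (c / N) - 1))
      Filter.atTop (nhds c) := by
  have hd : HasDerivAt Complex.exp 1 0 := by simpa using Complex.hasDerivAt_exp 0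
  have hslope : Filter.Tendsto (fun t : ℂ => t⁻¹ • (Complex.exp (0 + t) - Complex.exp 0))
      (nhdsWithin 0 {0}ᶜ) (nhds 1) := hd.tendsto_slope_zero
  have h0 : Filter.Tendsto (fun N : ℕ => c / N) Filter.atTop (nhdsWithin 0 {0}ᶜ) := by
    rw [tendsto_nhdsWithin_iff]
    constructor
    · have h1 : Filter.Tendsto (fun N : ℕ => ((N : ℝ)⁻¹ : ℝ)) Filter.atTop (nhds 0) :=
        tendsto_inv_atTop_zero.comp tendsto_natCast_atTop_atTop
      have h2 : Filter.Tendsto (fun N : ℕ => ((N : ℂ))⁻¹) Filter.atTop (nhds 0) := by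
        have := (Complex.continuous_ofReal.tendsto 0).comp h1
        simpa [Function.comp_def] using this
      have := h2.const_mul c
      simpa [div_eq_mul_inv] using this
    · filter_upwards [Filter.eventually_ge_atTop 1] with N hN
      have : (N : ℂ) ≠ 0 := Nat.cast_ne_zero.mpr (by omega)
      simp [div_eq_mul_inv, hc, this]
  have hcomp := hslope.comp h0
  have h3 : Filter.Tendsto (fun N : ℕ => (c / (N : ℂ))⁻¹ * (Complex.exp (c / N) - 1))
      Filter.atTop (nhds 1) := by
    apply hcomp.congr
    intro N
    simp [Function.comp_def, smul_eq_mul]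
  have h4 := h3.const_mul c
  rw [mul_one] at h4
  apply h4.congr'
  filter_upwards [Filter.eventually_ge_atTop 1] with N hN
  have hN0 : (N : ℂ) ≠ 0 := Nat.cast_ne_zero.mpr (by omega)
  field_simp

lemma key (θ : ℝ) :
    Filter.Tendsto (fun N : ℕ => ((N : ℂ))⁻¹ * JKernel N (θ / N)) Filter.atTop
      (nhds (Complex.exp ((π : ℂ) * Complex.I * θ) * ((sinKernel θ : ℝ) : ℂ))) := by
  rcases eq_or_ne θ 0 with h | h
  · subst h
    have hJ0 : ∀ N : ℕ, JKernel N ((0 : ℝ) / N) = (N : ℂ) := by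
      intro N; simp [JKernel, eTheta]
    simp only [hJ0]
    have hone : Filter.Tendsto (fun _ : ℕ => (1 : ℂ)) Filter.atTop (nhds 1) := tendsto_const_nhds
    have heq : (Complex.exp ((π : ℂ) * Complex.I * ((0:ℝ):ℂ)) * ((sinKernel 0 : ℝ) : ℂ)) = 1 := by
      simp [sinKernel]
    rw [heq]
    apply hone.congr'
    filter_upwards [Filter.eventually_ge_atTop 1] with N hN
    have hN0 : (N : ℂ) ≠ 0 := Nat.cast_ne_zero.mpr (by omega)
    field_simp
  · set c : ℂ := 2 * (π : ℂ) * Complex.I * θ with hcdef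
    have hπ : (π : ℂ) ≠ 0 := by exact_mod_cast Real.pi_ne_zero
    have hθ : (θ : ℂ) ≠ 0 := by exact_mod_cast h
    have hc : c ≠ 0 := by simp [hcdef, hπ, hθ, Complex.I_ne_zero]
    have h2πI : (2:ℂ) * π * Complex.I ≠ 0 := by simp [hπ, Complex.I_ne_zero]
    have hden := tendsto_nat_mul_exp_div_sub_one c hc
    have hlim : Filter.Tendsto
        (fun N : ℕ => (Complex.exp c - 1) / ((N : ℂ) * (Complex.exp (c / N) - 1)))
        Filter.atTop (nhds ((Complex.exp c - 1) / c)) :=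
      Filter.Tendsto.div tendsto_const_nhds hden hc
    have hval : (Complex.exp c - 1) / c
        = Complex.exp ((π : ℂ) * Complex.I * θ) * ((sinKernel θ : ℝ) : ℂ) := by
      set s : ℝ := π * θ with hs
      have hsne : s ≠ 0 := mul_ne_zero Real.pi_ne_zero h
      have hsC : (s : ℂ) ≠ 0 := by exact_mod_cast hsne
      have e1 : Complex.exp ((s : ℂ) * Complex.I) * Complex.exp ((s : ℂ) * Complex.I)
          = Complex.exp c := by
        rw [← Complex.exp_add]; congr 1; rw [hcdef]; push_cast [hs]; ring
      have e2 : Complex.exp ((s : ℂ) * Complex.I) * Complex.exp (-(s : ℂ) * Complex.I) = 1 := by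
        rw [← Complex.exp_add]; ring_nf; exact Complex.exp_zero
      have hI : Complex.I * Complex.I = -1 := Complex.I_mul_I
      have hnum : Complex.exp c - 1
          = Complex.exp ((s : ℂ) * Complex.I) * (2 * Complex.sin (s : ℂ) * Complex.I) := by
        rw [Complex.sin]
        linear_combination -e1 + e2 - Complex.exp ((s : ℂ) * Complex.I) *
          (Complex.exp (-(s : ℂ) * Complex.I) - Complex.exp ((s : ℂ) * Complex.I)) * hI
      have hsin : ((Real.sin s : ℝ) : ℂ) = Complex.sin (s : ℂ) := Complex.ofReal_sin s
      have hkernel : ((sinKernel θ : ℝ) : ℂ) = ((Real.sin s : ℝ) : ℂ) / (s : ℂ) := by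
        rw [sinKernel, if_neg h]; push_cast [hs]; ring
      have hcs : c = 2 * (s : ℂ) * Complex.I := by rw [hcdef]; push_cast [hs]; ring
      have hexparg : (π : ℂ) * Complex.I * θ = (s : ℂ) * Complex.I := by
        push_cast [hs]; ring
      rw [hkernel, hexparg, hsin, hnum]
      rw [hcs]
      field_simp
    rw [hval] at hlim
    apply hlim.congr'
    obtain ⟨M, hM⟩ := exists_nat_gt |θ|
    filter_upwards [Filter.eventually_ge_atTop (M + 1)] with N hN
    have hNθ : |θ| < N := lt_of_lt_of_le hM (by exact_mod_cast Nat.le_of_succ_le hN)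
    have hN0 : (N : ℂ) ≠ 0 := Nat.cast_ne_zero.mpr (by omega)
    set z : ℂ := Complex.exp (c / N) with hz
    have hz1 : z ≠ 1 := by
      intro hcon
      rw [hz, Complex.exp_eq_one_iff] at hcon
      obtain ⟨k, hk⟩ := hcon
      rw [div_eq_iff hN0] at hk
      have hθN : (θ : ℂ) = (k : ℂ) * (N : ℂ) := by
        apply mul_left_cancel₀ h2πI
        rw [hcdef] at hk
        linear_combination hk
      have hθk : θ = (k : ℝ) * N := by exact_mod_cast hθN
      rcases eq_or_ne k 0 with hk0 | hk0
      · rw [hk0] at hθk; simp at hθk; exact h hθk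
      · have hge : (N : ℝ) ≤ |θ| := by
          rw [hθk, abs_mul, Nat.abs_cast]
          have h1 : (1:ℝ) ≤ |(k:ℝ)| := by exact_mod_cast Int.one_le_abs hk0
          nlinarith [Nat.cast_nonneg (α := ℝ) N]
        linarith
    have hJ : JKernel N (θ / N) = (z ^ N - 1) / (z - 1) := by
      have hterm : ∀ m : ℕ, eTheta (m * (θ / N)) = z ^ m := by
        intro m
        rw [eTheta, hz, ← Complex.exp_nat_mul]
        congr 1
        rw [hcdef]
        push_cast
        field_simp
      rw [JKernel]
      simp only [hterm]
      exact geom_sum_eq hz1 N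
    have hzN : z ^ N = Complex.exp c := by
      rw [hz, ← Complex.exp_nat_mul]
      congr 1
      field_simp
    rw [hJ, hzN]
    have hzz : z - 1 ≠ 0 := sub_ne_zero.mpr hz1
    field_simp

/-- The scaled limit of the kernel determinant:
`lim_{N→∞} N^{-n} det[J_N((xⱼ−xₖ)/N)] = det[sin(π(xᵢ−xⱼ))/(π(xᵢ−xⱼ))]`. -/
theorem JKernel_det_tendsto_sine_kernel_det
    (n : ℕ) (hn : 1 ≤ n) (x : Fin n → ℝ) :
    Filter.Tendsto
      (fun N : ℕ => ((N : ℂ) ^ n)⁻¹ *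
        Matrix.det (Matrix.of fun j k : Fin n => JKernel N ((x j - x k) / N)))
      Filter.atTop
      (nhds ((Matrix.det (Matrix.of fun i j : Fin n => (sinKernel (x i - x j) : ℂ))))) := by
  set S : Matrix (Fin n) (Fin n) ℂ :=
    Matrix.of fun i j : Fin n => ((sinKernel (x i - x j) : ℝ) : ℂ) with hS
  set L : Matrix (Fin n) (Fin n) ℂ :=
    Matrix.of (fun j k : Fin n =>
      Complex.exp ((π : ℂ) * Complex.I * ((x j - x k : ℝ) : ℂ)) *
        ((sinKernel (x j - x k) : ℝ) : ℂ)) with hL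
  have hfn : ∀ N : ℕ, ((N : ℂ) ^ n)⁻¹ *
      (Matrix.of fun j k : Fin n => JKernel N ((x j - x k) / N)).det
      = (Matrix.of fun j k : Fin n => ((N : ℂ))⁻¹ * JKernel N ((x j - x k) / N)).det := by
    intro N
    have hsmul : (Matrix.of fun j k : Fin n => ((N : ℂ))⁻¹ * JKernel N ((x j - x k) / N))
        = ((N : ℂ))⁻¹ • Matrix.of (fun j k : Fin n => JKernel N ((x j - x k) / N)) := rfl
    rw [hsmul, Matrix.det_smul]
    simp [Fintype.card_fin, inv_pow]
  have hmat : Filter.Tendsto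
      (fun N : ℕ => Matrix.of fun j k : Fin n => ((N : ℂ))⁻¹ * JKernel N ((x j - x k) / N))
      Filter.atTop (nhds L) := by
    refine tendsto_pi_nhds.mpr ?_
    intro j
    refine tendsto_pi_nhds.mpr ?_
    intro k
    exact key (x j - x k)
  have hdet : Filter.Tendsto
      (fun N : ℕ => (Matrix.of fun j k : Fin n => ((N : ℂ))⁻¹ * JKernel N ((x j - x k) / N)).det)
      Filter.atTop (nhds L.det) :=
    ((Continuous.matrix_det continuous_id).tendsto L).comp hmat
  have hLS : L.det = S.det := by
    have hfact : L = Matrix.diagonal (fun j : Fin n => Complex.exp ((π : ℂ) * Complex.I * x j))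
        * S * Matrix.diagonal (fun k : Fin n => Complex.exp (-((π : ℂ) * Complex.I * x k))) := by
      ext j k
      simp only [hL, hS, Matrix.of_apply, Matrix.mul_diagonal, Matrix.diagonal_mul]
      rw [show ((π : ℂ) * Complex.I * ((x j - x k : ℝ) : ℂ))
          = (π : ℂ) * Complex.I * x j + (-((π : ℂ) * Complex.I * x k)) by push_cast; ring,
        Complex.exp_add]
      ring
    rw [hfact, Matrix.det_mul, Matrix.det_mul, Matrix.det_diagonal, Matrix.det_diagonal]
    rw [mul_comm _ (∏ k, Complex.exp (-((π : ℂ) * Complex.I * x k))), ← mul_assoc, ← Finset.prod_mul_distrib]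
    have : ∀ j : Fin n, Complex.exp (-((π : ℂ) * Complex.I * x j)) *
        Complex.exp ((π : ℂ) * Complex.I * x j) = 1 := by
      intro j; rw [← Complex.exp_add]; simp
    simp [this]
  have hfinal : Filter.Tendsto
      (fun N : ℕ => ((N : ℂ) ^ n)⁻¹ *
        (Matrix.of fun j k : Fin n => JKernel N ((x j - x k) / N)).det)
      Filter.atTop (nhds L.det) := by
    apply hdet.congr
    intro N
    exact (hfn N).symm
  rw [hLS] at hfinal
  exact hfinal
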